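/- A word of length n contains fewer than n/2 cubic runs. -/

import Mathlib

open List

universe u

/-- The factor `w[i..j]` of a word (inclusive positions). -/
def factor {α : Type u} (w : List α) (i j : ℕ) : List α := (w.drop i).take (j - i + 1)

/-- `p` is a period length of the word `u`. -/
def HasPeriodLen {α : Type u} (u : List α) (p : ℕ) : Prop :=
  1 ≤ p ∧ ∀ k, k + p < u.length → u[k]? = u[k + p]?

/-- The smallest period of a word. -/
noncomputable def minPeriod {α : Type u} (u : List α) : ℕ := sInf {p | HasPeriodLen u p}

/-- `[i..j]` is a run in `w`: the factor is periodic with smallest period at most half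
its length, and the periodicity extends neither to the left nor to the right. -/
def IsRun {α : Type u} (w : List α) (i j : ℕ) : Prop :=
  i < j ∧ j < w.length ∧
  2 * minPeriod (factor w i j) ≤ j - i + 1 ∧
  (0 < i → minPeriod (factor w i j) < minPeriod (factor w (i - 1) j)) ∧
  (j + 1 < w.length → minPeriod (factor w i j) < minPeriod (factor w i (j + 1)))

/-- A cubic run: a run whose length is at least three times its smallest period. -/
noncomputable def IsCubicRun {α : Type u} (w : List α) (i j : ℕ) : Prop :=
  IsRun w i j ∧ 3 * minPeriod (factor w i j) ≤ j - i + 1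

/-!
Fix a linear order on the alphabet. To a run `[i..j]` of period `p` attach the order (the given
one or its dual) in which the letter following the run is smaller than the letter `p` positions
before it, and mark every `h > i` at which a length-`p` factor of the run that is a Lyndon word
for that order starts. The length-`p` factors of a run are the rotations of its primitive root,
and the least of them is a Lyndon word, so a cubic run has at least two marked positions.
Distinct runs have disjoint marked sets. Runs of equal period overlapping in `p` letters
coincide. If the orders agree and `p < p'`, the Lyndon word of length `p'` starting at a common
mark either lies inside the run of period `p`, and then has the smaller period `p`, or reaches
past its end, and then forces the letter after that run to be the larger one. If the orders are
opposite, the first letter of each Lyndon root is at most its last letter, which is the letter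
before the mark, strictly unless `p = 1`; so both periods would be `1`. All marks lie in
`[1, n - 1]`, whence `2 · #(cubic runs) ≤ n - 1`.
-/

theorem Set.Finite.mul_ncard_le_card_of_pairwiseDisjoint {ι β : Type*} [DecidableEq β]
    {S : Set ι} (hS : S.Finite) {f : ι → Finset β} {U : Finset β} {n : ℕ}
    (hdisj : S.PairwiseDisjoint f) (hsub : ∀ x ∈ S, f x ⊆ U) (hcard : ∀ x ∈ S, n ≤ (f x).card) :
    n * S.ncard ≤ U.card := by
  rw [Set.ncard_eq_toFinset_card S hS]
  calc n * hS.toFinset.card = hS.toFinset.card • n := by rw [smul_eq_mul, mul_comm]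
    _ ≤ ∑ x ∈ hS.toFinset, (f x).card :=
      Finset.card_nsmul_le_sum _ _ _ fun x hx => hcard x (hS.mem_toFinset.1 hx)
    _ = (hS.toFinset.biUnion f).card := (Finset.card_biUnion (by simpa using hdisj)).symm
    _ ≤ U.card :=
      Finset.card_le_card (Finset.biUnion_subset.2 fun x hx => hsub x (hS.mem_toFinset.1 hx))

namespace List

variable {α : Type*}

theorem append_lt_append_of_lt_of_not_prefix [LT α] {a b : List α} (h : a < b) (hab : ¬a <+: b)
    (x y : List α) : a ++ x < b ++ y := by
  induction h with
  | nil => exact absurd nil_prefix hab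
  | rel h => exact Lex.rel h
  | cons _ ih => exact Lex.cons (ih fun h => hab ((prefix_cons_inj _).2 h))

variable [LinearOrder α] {l m : List α} {d : ℕ} {a b : α}

theorem lt_of_getElem?_lt (hagree : ∀ k < d, l[k]? = m[k]?) (ha : l[d]? = some a)
    (hb : m[d]? = some b) (hab : a < b) : l < m := by
  obtain ⟨hdl, rfl⟩ := getElem?_eq_some_iff.1 ha
  obtain ⟨hdm, rfl⟩ := getElem?_eq_some_iff.1 hb
  refine List.lt_iff_exists.2 (Or.inr ⟨d, hdl, hdm, fun k hk => ?_, hab⟩)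
  simpa [getElem?_eq_getElem (hk.trans hdl), getElem?_eq_getElem (hk.trans hdm)] using hagree k hk

theorem lt_of_lt_of_getElem? (h : l < m) (hagree : ∀ k < d, l[k]? = m[k]?) (ha : l[d]? = some a)
    (hb : m[d]? = some b) (hab : a ≠ b) : a < b := by
  refine (lt_or_gt_of_ne hab).resolve_right fun hba => ?_
  exact lt_asymm h (lt_of_getElem?_lt (fun k hk => (hagree k hk).symm) hb ha hba)

end List

def IsLyndon {α : Type*} [LT α] (l : List α) : Prop :=
  ∀ c, 0 < c → c < l.length → l < l.drop c

section Lyndon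

variable {α : Type*} [LinearOrder α] {l : List α}

theorem isLyndon_of_lt_rotate (h : ∀ c, 0 < c → c < l.length → l < l.rotate c) : IsLyndon l := by
  intro c hc0 hc
  by_contra hnot
  rw [not_lt] at hnot
  by_cases hpre : l.drop c <+: l
  · -- `l = l.drop c ++ x`: comparing `l` with its rotation by `c` gives `x < l.take c`, so the
    -- rotation starting with `x` lies below `l`
    obtain ⟨x, hx⟩ := hpre
    have hxlen : x.length = c := by
      have := congrArg length hx
      simp only [length_append, length_drop] at this
      omega
    have hxu : x < l.take c := by
      have h1 := h c hc0 hc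
      rw [rotate_eq_drop_append_take hc.le] at h1
      nth_rewrite 1 [← hx] at h1
      rcases lt_trichotomy x (l.take c) with hlt | rfl | hgt
      · exact hlt
      · exact absurd h1 (lt_irrefl _)
      · exact absurd (append_left_lt hgt) (lt_asymm h1)
    have hrot : l.rotate (l.length - c) = x ++ l.take (l.length - c) := by
      rw [rotate_eq_drop_append_take (by omega)]
      congr 1
      calc l.drop (l.length - c) = (l.drop c ++ x).drop (l.drop c).length := by
            rw [hx, length_drop]
        _ = x := drop_left
    have hne : ¬x <+: l.take c := fun hp => ne_of_lt hxu (hp.eq_of_length (by simp; omega))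
    have := append_lt_append_of_lt_of_not_prefix hxu hne (l.take (l.length - c)) (l.drop c)
    rw [take_append_drop, ← hrot] at this
    exact lt_asymm (h (l.length - c) (by omega) (by omega)) this
  · have hlt : l.drop c < l := lt_of_le_of_ne hnot fun heq => hpre (by rw [heq])
    have := append_lt_append_of_lt_of_not_prefix hlt hpre (l.take c) []
    rw [append_nil, ← rotate_eq_drop_append_take hc.le] at this
    exact lt_asymm (h c hc0 hc) this

theorem exists_isLyndon_rotate (hl : l ≠ [])
    (hprim : ∀ c, 0 < c → c < l.length → l.rotate c ≠ l) :
    ∃ c < l.length, IsLyndon (l.rotate c) := by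
  have hpos : 0 < l.length := length_pos_iff.2 hl
  obtain ⟨c, hc, hmin⟩ :=
    (Finset.range l.length).exists_min_image l.rotate (Finset.nonempty_range_iff.2 hpos.ne')
  rw [Finset.mem_range] at hc
  refine ⟨c, hc, isLyndon_of_lt_rotate fun e he0 he => ?_⟩
  rw [length_rotate] at he
  have hle : l.rotate c ≤ (l.rotate c).rotate e := by
    rw [rotate_rotate, ← rotate_mod l (c + e)]
    exact hmin _ (Finset.mem_range.2 (Nat.mod_lt _ hpos))
  refine lt_of_le_of_ne hle fun heq => hprim e he0 he ?_
  have := congrArg (rotate · (l.length - c)) heq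
  simp only [rotate_rotate] at this
  rwa [show c + (l.length - c) = l.length by omega, rotate_length,
    show c + e + (l.length - c) = e + l.length by omega, ← rotate_mod, Nat.add_mod_right,
    rotate_mod, eq_comm] at this

theorem IsLyndon.not_hasPeriodLen (hl : IsLyndon l) {c : ℕ} (hc : c < l.length) :
    ¬HasPeriodLen l c := by
  rintro ⟨hc0, hper⟩
  have hpre : l.drop c <+: l := by
    rw [prefix_iff_eq_take]
    refine ext_getElem? fun k => ?_
    rw [getElem?_drop, getElem?_take, length_drop]
    split_ifs with hk
    · rw [(hper k (by omega)), Nat.add_comm]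
    · exact getElem?_eq_none (by omega)
  exact List.not_lt.2 hpre.le (hl c hc0 hc)

theorem IsLyndon.head_lt_last (hl : IsLyndon l) (h2 : 2 ≤ l.length) {a b : α}
    (ha : l[0]? = some a) (hb : l[l.length - 1]? = some b) : a < b := by
  have hlt := hl (l.length - 1) (by omega) (by omega)
  obtain ⟨_, rfl⟩ := List.getElem?_eq_some_iff.1 hb
  rw [drop_length_sub_one (ne_nil_of_length_pos (by omega)), getLast_eq_getElem] at hlt
  obtain _ | ⟨a', t⟩ := l
  · simp at h2
  · obtain rfl : a' = a := by simpa using ha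
    simpa [cons_lt_cons_iff] using hlt

end Lyndon

section Periods

variable {α : Type*} {w : List α} {i j i' j' p : ℕ}

theorem length_factor (hij : i ≤ j) (hj : j < w.length) : (factor w i j).length = j - i + 1 := by
  simp only [factor, length_take, length_drop]
  omega

theorem getElem?_factor {t : ℕ} (ht : t < j - i + 1) : (factor w i j)[t]? = w[i + t]? := by
  simp only [factor, getElem?_take, ht, if_true, getElem?_drop]

theorem length_factor_add_sub_one (hp : 0 < p) (h : i + p ≤ w.length) :
    (factor w i (i + p - 1)).length = p := by
  rw [length_factor (by omega) (by omega)]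
  omega

def HasPeriodOn (w : List α) (i j p : ℕ) : Prop :=
  ∀ k, i ≤ k → k + p ≤ j → w[k]? = w[k + p]?

theorem HasPeriodOn.mono (h : HasPeriodOn w i j p) (hi : i ≤ i') (hj : j' ≤ j) :
    HasPeriodOn w i' j' p :=
  fun k hk1 hk2 => h k (hi.trans hk1) (hk2.trans hj)

theorem HasPeriodOn.union (h : HasPeriodOn w i j p) (h' : HasPeriodOn w i' j' p)
    (hov : max i i' + p ≤ min j j' + 1) : HasPeriodOn w (min i i') (max j j') p := by
  intro k hk1 hk2
  by_cases hk : i ≤ k ∧ k + p ≤ j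
  · exact h k hk.1 hk.2
  · exact h' k (by omega) (by omega)

theorem HasPeriodOn.getElem?_add_mul (h : HasPeriodOn w i j p) {k : ℕ} (hk : i ≤ k) :
    ∀ q, k + p * q ≤ j → w[k]? = w[k + p * q]?
  | 0, _ => rfl
  | q + 1, hq => by
    rw [h.getElem?_add_mul hk q (by nlinarith),
      h (k + p * q) (by omega) (by linarith [mul_add p q 1]), mul_add, mul_one, add_assoc]

theorem HasPeriodOn.getElem?_eq_mod (h : HasPeriodOn w i j p) {k : ℕ} (hk1 : i ≤ k)
    (hk2 : k ≤ j) : w[k]? = w[i + (k - i) % p]? := by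
  have hdiv := Nat.mod_add_div (k - i) p
  rw [h.getElem?_add_mul (Nat.le_add_right i _) ((k - i) / p) (by omega)]
  congr 1
  omega

theorem HasPeriodOn.factor_eq_rotate (h : HasPeriodOn w i j p) (hp : 0 < p) (hj : j < w.length)
    {g : ℕ} (hg : i ≤ g) (hgj : g + p ≤ j + 1) :
    factor w g (g + p - 1) = (factor w i (i + p - 1)).rotate (g - i) := by
  have hlen := length_factor_add_sub_one (w := w) hp (by omega : i + p ≤ w.length)
  refine ext_getElem? fun t => ?_
  by_cases ht : t < p
  · have := Nat.mod_lt (t + (g - i)) hp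
    rw [getElem?_factor (by omega), getElem?_rotate (by omega), hlen, getElem?_factor (by omega),
      h.getElem?_eq_mod (by omega) (by omega), show g + t - i = t + (g - i) by omega]
  · rw [getElem?_eq_none (by rw [length_factor (by omega) (by omega)]; omega),
      getElem?_eq_none (by rw [length_rotate, hlen]; omega)]

theorem hasPeriodLen_factor_iff (hij : i ≤ j) (hj : j < w.length) :
    HasPeriodLen (factor w i j) p ↔ 1 ≤ p ∧ HasPeriodOn w i j p := by
  refine and_congr_right fun _ => ⟨fun h k hk1 hk2 => ?_, fun h k hk => ?_⟩
  · have := h (k - i) (by rw [length_factor hij hj]; omega)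
    rwa [getElem?_factor (by omega), getElem?_factor (by omega), Nat.add_sub_cancel' hk1,
      ← Nat.add_assoc, Nat.add_sub_cancel' hk1] at this
  · rw [length_factor hij hj] at hk
    rw [getElem?_factor (by omega), getElem?_factor (by omega), ← Nat.add_assoc]
    exact h (i + k) (by omega) (by omega)

theorem hasPeriodLen_minPeriod (u : List α) : HasPeriodLen u (minPeriod u) :=
  Nat.sInf_mem (s := {p | HasPeriodLen u p}) ⟨u.length + 1, by omega, fun k hk => by omega⟩

theorem minPeriod_le {u : List α} (h : HasPeriodLen u p) : minPeriod u ≤ p :=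
  Nat.sInf_le h

theorem one_le_minPeriod (u : List α) : 1 ≤ minPeriod u :=
  (hasPeriodLen_minPeriod u).1

end Periods

namespace IsRun

variable {α : Type*} {w : List α} {i j i' j' : ℕ}

theorem hasPeriodOn (hr : IsRun w i j) : HasPeriodOn w i j (minPeriod (factor w i j)) :=
  ((hasPeriodLen_factor_iff hr.1.le hr.2.1).1 (hasPeriodLen_minPeriod _)).2

theorem not_hasPeriodOn (hr : IsRun w i j) (hi : i' ≤ i) (hj : j ≤ j') (hj' : j' < w.length)
    (hext : i' < i ∨ j < j') : ¬HasPeriodOn w i' j' (minPeriod (factor w i j)) := by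
  intro hper
  have hij := hr.1
  have hp := one_le_minPeriod (factor w i j)
  rcases hext with hlt | hlt
  · have := minPeriod_le ((hasPeriodLen_factor_iff (by omega) hr.2.1).2
      ⟨hp, hper.mono (by omega : i' ≤ i - 1) hj⟩)
    exact absurd (hr.2.2.2.1 (by omega)) this.not_gt
  · have := minPeriod_le ((hasPeriodLen_factor_iff (by omega) (by omega)).2
      ⟨hp, hper.mono hi (by omega : j + 1 ≤ j')⟩)
    exact absurd (hr.2.2.2.2 (by omega)) this.not_gt

theorem getElem?_sub_ne_getElem?_succ (hr : IsRun w i j) (hj : j + 1 < w.length) :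
    w[j + 1 - minPeriod (factor w i j)]? ≠ w[j + 1]? := by
  intro heq
  refine hr.not_hasPeriodOn le_rfl j.le_succ hj (Or.inr j.lt_succ_self) fun k hk1 hk2 => ?_
  by_cases hk : k + minPeriod (factor w i j) ≤ j
  · exact hr.hasPeriodOn k hk1 hk
  · obtain rfl : k = j + 1 - minPeriod (factor w i j) := by omega
    rwa [Nat.sub_add_cancel (by omega)]

theorem rotate_root_ne (hr : IsRun w i j) {c : ℕ} (hc0 : 0 < c)
    (hc : c < minPeriod (factor w i j)) :
    (factor w i (i + minPeriod (factor w i j) - 1)).rotate c ≠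
      factor w i (i + minPeriod (factor w i j) - 1) := by
  have hij := hr.1
  have hjn := hr.2.1
  have hp2 := hr.2.2.1
  generalize hp : minPeriod (factor w i j) = p at *
  have hper := hr.hasPeriodOn
  rw [hp] at hper
  intro heq
  have hlen := length_factor_add_sub_one (w := w) (by omega : 0 < p) (by omega : i + p ≤ w.length)
  have hperc : HasPeriodOn w i j c := by
    intro k hk1 hk2
    have := Nat.mod_lt (k - i) (by omega : 0 < p)
    have := Nat.mod_lt (k - i + c) (by omega : 0 < p)
    have hrot := congrArg (·[(k - i) % p]?) heq
    rw [getElem?_rotate (by omega), hlen, Nat.mod_add_mod, getElem?_factor (by omega),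
      getElem?_factor (by omega)] at hrot
    rw [hper.getElem?_eq_mod hk1 (by omega), hper.getElem?_eq_mod (by omega) hk2, ← hrot,
      Nat.sub_add_comm hk1]
  have := minPeriod_le ((hasPeriodLen_factor_iff hr.1.le hr.2.1).2 ⟨hc0, hperc⟩)
  omega

theorem eq_of_overlap (hr : IsRun w i j) (hr' : IsRun w i' j')
    (hp : minPeriod (factor w i j) = minPeriod (factor w i' j'))
    (hov : max i i' + minPeriod (factor w i j) ≤ min j j' + 1) : i = i' ∧ j = j' := by
  have hper := hr.hasPeriodOn.union (hp ▸ hr'.hasPeriodOn) hov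
  have := hr.2.1
  have := hr'.2.1
  by_contra hne
  by_cases hext : min i i' < i ∨ j < max j j'
  · exact hr.not_hasPeriodOn (by omega) (by omega) (by omega) hext hper
  · exact hr'.not_hasPeriodOn (by omega) (by omega) (by omega) (by omega) (hp ▸ hper)

end IsRun

def RightDescends {α : Type*} [LT α] (w : List α) (i j : ℕ) : Prop :=
  ∀ a b, w[j + 1 - minPeriod (factor w i j)]? = some a → w[j + 1]? = some b → b < a

noncomputable def lyndonRootStarts {α : Type*} [LT α] (w : List α) (i j : ℕ) : Finset ℕ :=
  open Classical in
  (Finset.Ioc i (j + 1 - minPeriod (factor w i j))).filter fun h =>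
    IsLyndon (factor w h (h + minPeriod (factor w i j) - 1))

theorem mem_lyndonRootStarts {α : Type*} [LT α] {w : List α} {i j h : ℕ} :
    h ∈ lyndonRootStarts w i j ↔ i < h ∧ h + minPeriod (factor w i j) ≤ j + 1 ∧
      IsLyndon (factor w h (h + minPeriod (factor w i j) - 1)) := by
  have := one_le_minPeriod (factor w i j)
  simp only [lyndonRootStarts, Finset.mem_filter, Finset.mem_Ioc]
  constructor
  · rintro ⟨⟨h1, h2⟩, h3⟩
    exact ⟨h1, by omega, h3⟩
  · rintro ⟨h1, h2, h3⟩
    exact ⟨⟨h1, by omega⟩, h3⟩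

section LyndonRoots

variable {α : Type*} [LinearOrder α] {w : List α} {i j i' j' h : ℕ}

theorem IsRun.rightDescends_toDual (hr : IsRun w i j) (hd : ¬RightDescends w i j) :
    RightDescends (α := αᵒᵈ) w i j := by
  intro a b ha hb
  simp only [RightDescends, not_forall, not_lt] at hd
  obtain ⟨a', b', ha', hb', hab⟩ := hd
  obtain rfl : a' = a := Option.some_inj.1 (ha'.symm.trans ha)
  obtain rfl : b' = b := Option.some_inj.1 (hb'.symm.trans hb)
  obtain ⟨hjn, -⟩ := List.getElem?_eq_some_iff.1 hb'
  exact lt_of_le_of_ne hab fun h => hr.getElem?_sub_ne_getElem?_succ hjn (by rw [ha', hb', h])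

theorem IsRun.not_rightDescends_of_isLyndon (hr : IsRun w i j) {q : ℕ} (hi : i ≤ h)
    (hj : h + minPeriod (factor w i j) ≤ j + 1) (hjq : j + 1 < h + q) (hqn : h + q ≤ w.length)
    (hl : IsLyndon (factor w h (h + q - 1))) : ¬RightDescends w i j := by
  intro hdesc
  unfold RightDescends at hdesc
  have hp1 := one_le_minPeriod (factor w i j)
  have hne := hr.getElem?_sub_ne_getElem?_succ (by omega)
  have hper := hr.hasPeriodOn
  generalize minPeriod (factor w i j) = p at *
  obtain ⟨a, ha⟩ : ∃ a, w[j + 1 - p]? = some a := ⟨_, getElem?_eq_getElem (by omega)⟩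
  obtain ⟨b, hb⟩ : ∃ b, w[j + 1]? = some b := ⟨_, getElem?_eq_getElem (by omega)⟩
  have hwin : ∀ x < q, (factor w h (h + q - 1))[x]? = w[h + x]? :=
    fun x hx => getElem?_factor (by omega)
  have hlen : (factor w h (h + q - 1)).length = q := length_factor_add_sub_one (by omega) hqn
  -- the window and its suffix from `p` agree up to the end of the run, where the run breaks
  have hab : a < b := by
    refine List.lt_of_lt_of_getElem? (hl p (by omega) (by omega)) (d := j + 1 - p - h)
      (fun k hk => ?_) ?_ ?_ fun hab => hne (by rw [ha, hb, hab])
    · rw [getElem?_drop, hwin k (by omega), hwin (p + k) (by omega),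
        hper (h + k) (by omega) (by omega), add_comm p k, add_assoc]
    · rw [hwin _ (by omega), ← ha]
      congr 1
      omega
    · rw [getElem?_drop, hwin _ (by omega), ← hb]
      congr 1
      omega
  exact lt_asymm hab (hdesc a b ha hb)

theorem IsRun.not_isLyndon_factor (hr : IsRun w i j) (hdesc : RightDescends w i j) {q : ℕ}
    (hi : i ≤ h) (hj : h + minPeriod (factor w i j) ≤ j + 1) (hq : minPeriod (factor w i j) < q)
    (hqn : h + q ≤ w.length) : ¬IsLyndon (factor w h (h + q - 1)) := by
  intro hl
  by_cases hjq : j + 1 < h + q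
  · exact hr.not_rightDescends_of_isLyndon hi hj hjq hqn hl hdesc
  · refine hl.not_hasPeriodLen (by rw [length_factor_add_sub_one (by omega) hqn]; exact hq)
      ((hasPeriodLen_factor_iff (by omega) (by omega)).2
        ⟨one_le_minPeriod _, hr.hasPeriodOn.mono hi (by omega)⟩)

theorem IsRun.le_pred_of_isLyndon (hr : IsRun w i j) (hi : i < h)
    (hj : h + minPeriod (factor w i j) ≤ j + 1)
    (hl : IsLyndon (factor w h (h + minPeriod (factor w i j) - 1))) {z a : α}
    (hz : w[h]? = some z) (ha : w[h - 1]? = some a) :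
    z ≤ a ∧ (z = a → minPeriod (factor w i j) = 1) := by
  have hp1 := one_le_minPeriod (factor w i j)
  have hper := hr.hasPeriodOn
  have hjn := hr.2.1
  generalize minPeriod (factor w i j) = p at *
  have hlast : w[h + p - 1]? = some a := by
    rw [← ha, hper (h - 1) (by omega) (by omega), show h - 1 + p = h + p - 1 by omega]
  rcases hp1.eq_or_lt with rfl | hp2
  · obtain rfl : z = a := Option.some_inj.1 (hz.symm.trans (by simpa using hlast))
    exact ⟨le_rfl, fun _ => rfl⟩
  · have hlen : (factor w h (h + p - 1)).length = p :=
      length_factor_add_sub_one (by omega) (by omega)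
    have hza := hl.head_lt_last (by omega) (by rw [getElem?_factor (by omega), add_zero, hz])
      (by rw [hlen, getElem?_factor (by omega), ← hlast]; congr 1; omega)
    exact ⟨hza.le, fun h => absurd h hza.ne⟩

theorem IsCubicRun.two_le_card_lyndonRootStarts (hcr : IsCubicRun w i j) :
    2 ≤ (lyndonRootStarts w i j).card := by
  obtain ⟨hr, hcub⟩ := hcr
  have hp1 := one_le_minPeriod (factor w i j)
  have hjn := hr.2.1
  have hprim := fun c (hc0 : 0 < c) => hr.rotate_root_ne (c := c) hc0
  have hper := hr.hasPeriodOn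
  have hmem := fun g => (mem_lyndonRootStarts (w := w) (i := i) (j := j) (h := g)).2
  generalize minPeriod (factor w i j) = p at *
  have hlen : (factor w i (i + p - 1)).length = p :=
    length_factor_add_sub_one (by omega) (by omega)
  obtain ⟨c, hc, hlyn⟩ := exists_isLyndon_rotate (l := factor w i (i + p - 1))
    (ne_nil_of_length_pos (by omega)) fun c hc0 hc => hprim c hc0 (hlen ▸ hc)
  rw [hlen] at hc
  have hstart : ∀ g, i < g → g + p ≤ j + 1 → (g - i) % p = c → g ∈ lyndonRootStarts w i j :=
    fun g hg hgj hgc => hmem g ⟨hg, hgj, by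
      rwa [hper.factor_eq_rotate (by omega) hjn hg.le hgj, ← rotate_mod, hlen, hgc]⟩
  -- `0 < c'` puts the first mark after `i`; cubicity leaves room for the second at `i + c' + p`
  obtain ⟨c', hc'0, hc'p, hc'⟩ : ∃ c', 0 < c' ∧ c' ≤ p ∧ c' % p = c := by
    rcases Nat.eq_zero_or_pos c with rfl | hc0
    · exact ⟨p, by omega, le_rfl, Nat.mod_self p⟩
    · exact ⟨c, hc0, hc.le, Nat.mod_eq_of_lt hc⟩
  refine Finset.one_lt_card.2 ⟨i + c', hstart _ (by omega) (by omega) (by simpa using hc'),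
    i + c' + p, hstart _ (by omega) (by omega) (by rwa [show i + c' + p - i = c' + p by omega,
      Nat.add_mod_right]), by omega⟩

theorem disjoint_lyndonRootStarts_of_lt (hr : IsRun w i j) (hdesc : RightDescends w i j)
    (hr' : IsRun w i' j') (hlt : minPeriod (factor w i j) < minPeriod (factor w i' j')) :
    Disjoint (lyndonRootStarts w i j) (lyndonRootStarts w i' j') := by
  refine Finset.disjoint_left.2 fun h hm hm' => ?_
  obtain ⟨hi, hj, -⟩ := mem_lyndonRootStarts.1 hm
  obtain ⟨-, hj', hl'⟩ := mem_lyndonRootStarts.1 hm'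
  exact hr.not_isLyndon_factor hdesc hi.le hj hlt (by have := hr'.2.1; omega) hl'

theorem disjoint_lyndonRootStarts_toDual (hr : IsRun w i j) (hr' : IsRun w i' j')
    (hne : minPeriod (factor w i j) ≠ minPeriod (factor w i' j')) :
    Disjoint (lyndonRootStarts w i j) (lyndonRootStarts (α := αᵒᵈ) w i' j') := by
  refine Finset.disjoint_left.2 fun h hm hm' => ?_
  obtain ⟨hi, hj, hl⟩ := mem_lyndonRootStarts.1 hm
  obtain ⟨hi', hj', hl'⟩ := mem_lyndonRootStarts.1 hm'
  have := hr.2.1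
  have := one_le_minPeriod (factor w i j)
  obtain ⟨z, hz⟩ : ∃ z, w[h]? = some z := ⟨_, getElem?_eq_getElem (by omega)⟩
  obtain ⟨a, ha⟩ : ∃ a, w[h - 1]? = some a := ⟨_, getElem?_eq_getElem (by omega)⟩
  obtain ⟨hza, hp⟩ := hr.le_pred_of_isLyndon hi hj hl hz ha
  obtain ⟨haz, hp'⟩ := hr'.le_pred_of_isLyndon (α := αᵒᵈ) hi' hj' hl' hz ha
  have hza' : z = a := le_antisymm hza haz
  exact hne ((hp hza').trans (hp' hza').symm)

end LyndonRoots

noncomputable def markedPositions {α : Type*} [LinearOrder α] (w : List α) (i j : ℕ) :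
    Finset ℕ :=
  open Classical in
  if RightDescends w i j then lyndonRootStarts w i j else lyndonRootStarts (α := αᵒᵈ) w i j

section Marked

variable {α : Type*} [LinearOrder α] {w : List α} {i j i' j' h : ℕ}

theorem bounds_of_mem_markedPositions (hm : h ∈ markedPositions w i j) :
    i < h ∧ h + minPeriod (factor w i j) ≤ j + 1 := by
  unfold markedPositions at hm
  split_ifs at hm
  · exact ⟨(mem_lyndonRootStarts.1 hm).1, (mem_lyndonRootStarts.1 hm).2.1⟩
  · exact ⟨(mem_lyndonRootStarts.1 hm).1, (mem_lyndonRootStarts.1 hm).2.1⟩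

theorem IsRun.markedPositions_subset (hr : IsRun w i j) :
    markedPositions w i j ⊆ Finset.Ico 1 w.length := fun h hm => by
  have := bounds_of_mem_markedPositions hm
  have := hr.2.1
  have := one_le_minPeriod (factor w i j)
  rw [Finset.mem_Ico]
  omega

theorem IsCubicRun.two_le_card_markedPositions (hcr : IsCubicRun w i j) :
    2 ≤ (markedPositions w i j).card := by
  unfold markedPositions
  split_ifs
  · exact hcr.two_le_card_lyndonRootStarts
  · exact hcr.two_le_card_lyndonRootStarts (α := αᵒᵈ)

theorem disjoint_markedPositions_of_lt (hr : IsRun w i j) (hr' : IsRun w i' j')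
    (hlt : minPeriod (factor w i j) < minPeriod (factor w i' j')) :
    Disjoint (markedPositions w i j) (markedPositions w i' j') := by
  unfold markedPositions
  split_ifs with hd hd'
  · exact disjoint_lyndonRootStarts_of_lt hr hd hr' hlt
  · exact disjoint_lyndonRootStarts_toDual hr hr' hlt.ne
  · exact (disjoint_lyndonRootStarts_toDual hr' hr hlt.ne').symm
  · exact disjoint_lyndonRootStarts_of_lt (α := αᵒᵈ) hr (hr.rightDescends_toDual hd) hr' hlt

theorem disjoint_markedPositions (hr : IsRun w i j) (hr' : IsRun w i' j')
    (hne : (i, j) ≠ (i', j')) : Disjoint (markedPositions w i j) (markedPositions w i' j') := by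
  rcases lt_trichotomy (minPeriod (factor w i j)) (minPeriod (factor w i' j')) with hlt | heq | hgt
  · exact disjoint_markedPositions_of_lt hr hr' hlt
  · refine Finset.disjoint_left.2 fun h hm hm' => hne ?_
    obtain ⟨hi, hj⟩ := bounds_of_mem_markedPositions hm
    obtain ⟨hi', hj'⟩ := bounds_of_mem_markedPositions hm'
    obtain ⟨rfl, rfl⟩ := hr.eq_of_overlap hr' heq (by omega)
    rfl
  · exact (disjoint_markedPositions_of_lt hr' hr hgt).symm

end Marked

/-- A word of length `n` contains fewer than `n/2` cubic runs. -/
theorem cubic_runs_lt_half_length {α : Type u} (w : List α) (hw : w ≠ []) :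
    2 * {ij : ℕ × ℕ | IsCubicRun w ij.1 ij.2}.ncard < w.length := by
  let _ : LinearOrder α := IsWellOrder.linearOrder WellOrderingRel
  have hfin : {ij : ℕ × ℕ | IsCubicRun w ij.1 ij.2}.Finite :=
    ((Set.finite_Iio w.length).prod (Set.finite_Iio w.length)).subset fun ij hij => by
      have := hij.1.1
      have := hij.1.2.1
      exact ⟨Set.mem_Iio.2 (by omega), Set.mem_Iio.2 (by omega)⟩
  have hcount := hfin.mul_ncard_le_card_of_pairwiseDisjoint
    (f := fun ij => markedPositions w ij.1 ij.2) (U := Finset.Ico 1 w.length)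
    (fun _ hij _ hij' hne => disjoint_markedPositions hij.1 hij'.1 hne)
    (fun _ hij => hij.1.markedPositions_subset) (fun _ hij => hij.two_le_card_markedPositions)
  have := List.length_pos_iff.2 hw
  rw [Nat.card_Ico] at hcount
  omega
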